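/- arXiv:0907.2584 — 4 statements merged into one kernel-verified Lean document; each statement's English description precedes it below -/
import Mathlib

section
/- The parasupercovariant derivative D = ∂_θ + (θ^p/[p]_q!) ∂_x satisfies D^{p+1} f = ∂_x f for every parasuperfunction f(x,θ) = Σ_{k=0}^p f_k(x) θ^k with smooth components f_k. -/
open Complex Finset

/-- The `q`-integer `[n]_q = 1 + q + ⋯ + q^(n-1)` (so `[0]_q = 0`). -/
noncomputable def qint (q : ℂ) (n : ℕ) : ℂ := ∑ i ∈ Finset.range n, q ^ i

/-- The `q`-factorial `[n]_q! = [1]_q [2]_q ⋯ [n]_q`, with `[0]_q! = 1`. -/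
noncomputable def qfact (q : ℂ) (n : ℕ) : ℂ := ∏ i ∈ Finset.range n, qint q (i + 1)

/-- The parasupercovariant derivative `D = ∂_θ + (θ^p/[p]_q!) ∂_x` acting on the
components `(f_0, …, f_p)` of a parasuperfunction `f(x,θ) = Σ f_k(x) θ^k`:
`(Df)_k = [k+1]_q f_{k+1}` for `k < p` and `(Df)_p = (1/[p]_q!) f_0'`. -/
noncomputable def Dop (p : ℕ) (q : ℂ) (f : ℕ → ℝ → ℂ) : ℕ → ℝ → ℂ :=
  fun k x =>
    if k < p then qint q (k + 1) * f (k + 1) x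
    else if k = p then (qfact q p)⁻¹ * deriv (f 0) x
    else 0

lemma L1 (p : ℕ) (q : ℂ) : ∀ (k : ℕ), k ≤ p → ∀ f : ℕ → ℝ → ℂ,
    (Dop p q)^[k] f 0 = fun x => qfact q k * f k x := by
  intro k
  induction k with
  | zero => intro _ f; simp [qfact]
  | succ k ih =>
    intro hk f
    rw [Function.iterate_succ_apply, ih (Nat.le_of_succ_le hk) (Dop p q f)]
    funext x
    simp only [Dop, if_pos (Nat.lt_of_succ_le hk), qfact, Finset.prod_range_succ]
    ring

lemma L2 (p : ℕ) (q : ℂ) (k : ℕ) (hk : k ≤ p) (f : ℕ → ℝ → ℂ) :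
    (Dop p q)^[k + 1] f p = fun x => qfact q k * (qfact q p)⁻¹ * deriv (f k) x := by
  rw [Function.iterate_succ_apply']
  funext x
  simp only [Dop, lt_irrefl, if_false, if_true, eq_self_iff_true, L1 p q k hk f]
  rw [deriv_const_mul_field]
  ring

lemma L3 (p : ℕ) (q : ℂ) : ∀ (m k : ℕ), k + m ≤ p → ∀ f : ℕ → ℝ → ℂ,
    (Dop p q)^[m] f k = fun x => (∏ i ∈ Finset.Ico k (k + m), qint q (i + 1)) * f (k + m) x := by
  intro m
  induction m with
  | zero => intro k _ f; simp
  | succ m ih =>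
    intro k hk f
    rw [Function.iterate_succ_apply, ih k (by omega) (Dop p q f)]
    funext x
    have hkp : k + m < p := by omega
    simp only [Dop, if_pos hkp]
    simp only [show k + (m + 1) = k + m + 1 from rfl]
    rw [Finset.prod_Ico_succ_top (by omega : k ≤ k + m)]
    ring

lemma qfact_ne_zero (p : ℕ) (hp : 1 ≤ p) (q : ℂ)
    (hq : q = Complex.exp (2 * Real.pi * Complex.I / (p + 1))) :
    qfact q p ≠ 0 := by
  have hprim : IsPrimitiveRoot q (p + 1) := by
    have := Complex.isPrimitiveRoot_exp (p + 1) (by omega)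
    rw [hq]
    convert this using 3
    push_cast
    ring
  have hq1 : q ≠ 1 := hprim.ne_one (by omega)
  rw [qfact]
  apply Finset.prod_ne_zero_iff.mpr
  intro i hi
  rw [Finset.mem_range] at hi
  have hpow : q ^ (i + 1) ≠ 1 :=
    hprim.pow_ne_one_of_pos_of_lt (by omega) (by omega)
  rw [qint, geom_sum_eq hq1]
  exact div_ne_zero (sub_ne_zero.mpr hpow) (sub_ne_zero.mpr hq1)

/-- `D^(p+1) f = ∂_x f`: the parasupercovariant derivative is a `(p+1)`-th root of `∂_x`
on parasuperfunctions with smooth components. -/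
theorem Dop_pow_succ_p_eq_deriv (p : ℕ) (hp : 1 ≤ p) (q : ℂ)
    (hq : q = Complex.exp (2 * Real.pi * Complex.I / (p + 1)))
    (f : ℕ → ℝ → ℂ) (hf : ∀ k ≤ p, ContDiff ℝ (⊤ : ℕ∞) (f k)) (k : ℕ) (hk : k ≤ p) :
    (Dop p q)^[p + 1] f k = deriv (f k) := by
  have hsplit : p + 1 = (p - k) + (k + 1) := by omega
  rw [hsplit, Function.iterate_add_apply,
      L3 p q (p - k) k (by omega) ((Dop p q)^[k + 1] f)]
  have hkp : k + (p - k) = p := by omega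
  funext x
  rw [hkp, L2 p q k hk f]
  have key : (∏ i ∈ Finset.Ico k p, qint q (i + 1)) * qfact q k = qfact q p := by
    rw [qfact, qfact, mul_comm, Finset.prod_range_mul_prod_Ico _ hk]
  calc (∏ i ∈ Finset.Ico k p, qint q (i + 1)) * (qfact q k * (qfact q p)⁻¹ * deriv (f k) x)
      = ((∏ i ∈ Finset.Ico k p, qint q (i + 1)) * qfact q k) * (qfact q p)⁻¹ * deriv (f k) x := by ring
    _ = deriv (f k) x := by
        rw [key, mul_inv_cancel₀ (qfact_ne_zero p hp q hq), one_mul]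
end

section
/- Every solution of the eigenvalue equation D f = λ f with λ ∈ ℂ is of the form f(x,θ) = C e_q(λ^{p+1}x; λθ) for some C ∈ ℂ; equivalently, the components satisfy f_k(x) = C (λ^k/[k]_q!) e^{λ^{p+1} x}. -/
open Complex Finset

/-- Every solution of the eigenvalue equation `D f = λ f` is of the form
`f(x,θ) = C e_q(λ^(p+1)x; λθ)`; componentwise, `f_k(x) = C (λ^k/[k]_q!) e^(λ^(p+1)x)`. -/
theorem Dop_eigenfunction (p : ℕ) (hp : 1 ≤ p) (q : ℂ)
    (hq : q = Complex.exp (2 * Real.pi * Complex.I / (p + 1)))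
    (f : ℕ → ℝ → ℂ) (hf : ∀ k ≤ p, ContDiff ℝ (⊤ : ℕ∞) (f k)) (lam : ℂ)
    (h : ∀ k ≤ p, ∀ x : ℝ, Dop p q f k x = lam * f k x) :
    ∃ C : ℂ, ∀ k ≤ p, ∀ x : ℝ,
      f k x = C * (lam ^ k / qfact q k) * Complex.exp (lam ^ (p + 1) * x) := by
  have hp1 : ((p : ℂ) + 1) ≠ 0 := Nat.cast_add_one_ne_zero p
  have hπ : (2 * (Real.pi : ℂ) * Complex.I) ≠ 0 := by
    simp [Real.pi_ne_zero, Complex.I_ne_zero]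
  -- q^j ≠ 1 for 1 ≤ j ≤ p
  have hroot : ∀ j : ℕ, 1 ≤ j → j ≤ p → q ^ j ≠ 1 := by
    intro j h1 h2 hcon
    rw [hq, ← Complex.exp_nat_mul, Complex.exp_eq_one_iff] at hcon
    obtain ⟨n, hn⟩ := hcon
    have hdiv : ((j : ℂ) / ((p : ℂ) + 1)) = n := by
      apply mul_right_cancel₀ hπ
      rw [← hn]; ring
    have hn' : (j : ℂ) = n * ((p : ℂ) + 1) := by
      rw [div_eq_iff hp1] at hdiv
      rw [hdiv]
    have hz : (j : ℤ) = n * ((p : ℤ) + 1) := by exact_mod_cast hn'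
    have hj1 : (1 : ℤ) ≤ (j : ℤ) := by exact_mod_cast h1
    have hj2 : (j : ℤ) ≤ (p : ℤ) := by exact_mod_cast h2
    rcases le_or_gt n 0 with hn0 | hn0
    · have : n * ((p : ℤ) + 1) ≤ 0 := mul_nonpos_of_nonpos_of_nonneg hn0 (by positivity)
      linarith
    · have : (p : ℤ) + 1 ≤ n * ((p : ℤ) + 1) :=
        le_mul_of_one_le_left (by positivity) hn0
      linarith
  have hq1 : q ≠ 1 := by
    have := hroot 1 le_rfl hp
    simpa using this
  -- qint nonzero
  have hqint : ∀ j : ℕ, 1 ≤ j → j ≤ p → qint q j ≠ 0 := by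
    intro j h1 h2 hcon
    have := geom_sum_mul q j
    rw [show (∑ i ∈ Finset.range j, q ^ i) = qint q j from rfl, hcon, zero_mul] at this
    have : q ^ j = 1 := by
      have := this.symm
      linear_combination this
    exact hroot j h1 h2 this
  have hqfact : ∀ k ≤ p, qfact q k ≠ 0 := by
    intro k hk
    unfold qfact
    apply Finset.prod_ne_zero_iff.mpr
    intro i hi
    exact hqint (i + 1) (Nat.le_add_left 1 i) (by have := Finset.mem_range.mp hi; omega)
  -- step: f k = lam^k / [k]! * f 0
  have hstep : ∀ k ≤ p, ∀ x : ℝ, f k x = lam ^ k / qfact q k * f 0 x := by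
    intro k
    induction k with
    | zero => intro _ x; simp [qfact]
    | succ n ih =>
      intro hk x
      have hn : n < p := by omega
      have hrec := h n (le_of_lt hn) x
      rw [Dop, if_pos hn] at hrec
      have hne : qint q (n + 1) ≠ 0 := hqint (n + 1) (by omega) (by omega)
      have hfn := ih (by omega) x
      have hqf : qfact q (n + 1) = qfact q n * qint q (n + 1) := by
        rw [qfact, Finset.prod_range_succ]; rfl
      have hfne : qfact q n ≠ 0 := hqfact n (by omega)
      field_simp [hqf]
      have : qint q (n+1) * f (n+1) x = lam * (lam ^ n / qfact q n * f 0 x) := by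
        rw [hrec, hfn]
      field_simp at this
      linear_combination this + f (n + 1) x * hqf
  -- ODE for f 0
  set c : ℂ := lam ^ (p + 1) with hc
  have hode : ∀ x : ℝ, deriv (f 0) x = c * f 0 x := by
    intro x
    have hrec := h p le_rfl x
    rw [Dop, if_neg (lt_irrefl p), if_pos rfl] at hrec
    have hfp := hstep p le_rfl x
    have hfne : qfact q p ≠ 0 := hqfact p le_rfl
    rw [hfp] at hrec
    field_simp at hrec
    rw [hc, pow_succ]
    linear_combination hrec
  -- solve: f 0 x = f 0 0 * exp (c x)
  have hdiff : Differentiable ℝ (f 0) := (hf 0 (by omega)).differentiable (by simp)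
  have hconst : ∀ x : ℝ, f 0 x * Complex.exp (-(c * x)) = f 0 0 := by
    intro x
    have hD : ∀ y : ℝ, HasDerivAt (fun t : ℝ => f 0 t * Complex.exp (-(c * t))) 0 y := by
      intro y
      have h1 : HasDerivAt (f 0) (deriv (f 0) y) y := (hdiff y).hasDerivAt
      have h2 : HasDerivAt (fun t : ℝ => -(c * (t : ℂ))) (-c) y := by
        have : HasDerivAt (fun t : ℝ => (t : ℂ)) 1 y := Complex.ofRealCLM.hasDerivAt
        exact HasDerivAt.congr_deriv ((this.const_mul c).neg) (by ring)
      have h3 := h2.cexp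
      have := h1.mul h3
      refine HasDerivAt.congr_deriv this ?_
      rw [hode y]
      ring
    have := is_const_of_deriv_eq_zero (fun y => (hD y).differentiableAt)
      (fun y => (hD y).deriv) x 0
    simpa using this
  refine ⟨f 0 0, fun k hk x => ?_⟩
  have := hconst x
  have hf0 : f 0 x = f 0 0 * Complex.exp (c * x) := by
    rw [← this, mul_assoc, ← Complex.exp_add, neg_add_cancel, Complex.exp_zero, mul_one]
  rw [hstep k hk x, hf0]
  ring
end

section
/- For λ₊ ≠ λ₋ the two complex roots of x² + c₁x + c₂, the parasuperfunction f(x,θ) = C₁ e_q(λ₊^{p+1}x; λ₊θ) + C₂ e_q(λ₋^{p+1}x; λ₋θ) satisfies (D² + c₁D + c₂)f = 0 for all C₁, C₂ ∈ ℂ, and conversely every solution of this equation has this form. -/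
open Complex Finset

/- ### Auxiliary lemmas -/

lemma qpow_ne_one (p : ℕ) (hp : 1 ≤ p) (q : ℂ)
    (hq : q = Complex.exp (2 * Real.pi * Complex.I / (p + 1)))
    {n : ℕ} (h1 : 1 ≤ n) (h2 : n ≤ p) : q ^ n ≠ 1 := by
  intro h
  rw [hq, ← Complex.exp_nat_mul, Complex.exp_eq_one_iff] at h
  obtain ⟨m, hm⟩ := h
  have hp1 : ((p : ℂ) + 1) ≠ 0 := Nat.cast_add_one_ne_zero p
  have hpi : (2 * (Real.pi : ℂ) * Complex.I) ≠ 0 := by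
    simp [Real.pi_ne_zero, Complex.I_ne_zero]
  field_simp [hp1] at hm
  have h5 : ((n : ℂ) - m * (p + 1)) * (2 * (Real.pi : ℂ) * Complex.I) = 0 := by
    linear_combination (2 * (Real.pi : ℂ) * Complex.I) * hm
  have h6 : (n : ℂ) = m * ((p : ℂ) + 1) := by
    rcases mul_eq_zero.mp h5 with h | h
    · linear_combination h
    · exact absurd h hpi
  have hz : (n : ℤ) = m * (p + 1) := by exact_mod_cast h6
  rcases le_or_gt m 0 with hm0 | hm0
  · have : (n : ℤ) ≤ 0 := hz ▸ mul_nonpos_of_nonpos_of_nonneg hm0 (by positivity)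
    omega
  · have : ((p : ℤ) + 1) ≤ n := by rw [hz]; nlinarith
    omega

lemma qint_ne (p : ℕ) (hp : 1 ≤ p) (q : ℂ)
    (hq : q = Complex.exp (2 * Real.pi * Complex.I / (p + 1)))
    {n : ℕ} (h1 : 1 ≤ n) (h2 : n ≤ p) : qint q n ≠ 0 := by
  have hq1 : q ≠ 1 := by
    simpa using qpow_ne_one p hp q hq (le_refl 1) hp (n := 1)
  rw [qint, geom_sum_eq hq1]
  exact div_ne_zero (sub_ne_zero.mpr (qpow_ne_one p hp q hq h1 h2))
    (sub_ne_zero.mpr hq1)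

lemma qfact_ne (p : ℕ) (hp : 1 ≤ p) (q : ℂ)
    (hq : q = Complex.exp (2 * Real.pi * Complex.I / (p + 1)))
    {k : ℕ} (hk : k ≤ p) : qfact q k ≠ 0 := by
  rw [qfact]
  exact Finset.prod_ne_zero_iff.mpr fun i hi =>
    qint_ne p hp q hq (Nat.succ_le_succ (Nat.zero_le i))
      (by simp only [Finset.mem_range] at hi; omega)

lemma hasDerivAt_cexp_mul (c : ℂ) (x : ℝ) :
    HasDerivAt (fun y : ℝ => Complex.exp (c * y)) (c * Complex.exp (c * x)) x := by
  have h1 : HasDerivAt (fun z : ℂ => Complex.exp (c * z))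
      (Complex.exp (c * x) * c) (x : ℂ) := by
    simpa using ((hasDerivAt_id (x : ℂ)).const_mul c).cexp
  simpa [mul_comm] using h1.comp_ofReal

/-- Single pure-exponential component function. -/
noncomputable def Tf (p : ℕ) (q lam C : ℂ) : ℕ → ℝ → ℂ :=
  fun k x => C * (lam ^ k / qfact q k) * Complex.exp (lam ^ (p + 1) * x)

lemma qfact_succ (q : ℂ) (k : ℕ) : qfact q (k + 1) = qfact q k * qint q (k + 1) :=
  Finset.prod_range_succ _ _

lemma Dop_lt {p : ℕ} (q : ℂ) (f : ℕ → ℝ → ℂ) {k : ℕ} (x : ℝ) (h : k < p) :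
    Dop p q f k x = qint q (k + 1) * f (k + 1) x := by
  simp only [Dop, if_pos h]

lemma Dop_eq (p : ℕ) (q : ℂ) (f : ℕ → ℝ → ℂ) (x : ℝ) :
    Dop p q f p x = (qfact q p)⁻¹ * deriv (f 0) x := by
  simp [Dop]

lemma qint_one (q : ℂ) : qint q 1 = 1 := by simp [qint]

lemma Dop_zero {p : ℕ} (hp : 1 ≤ p) (q : ℂ) (f : ℕ → ℝ → ℂ) :
    Dop p q f 0 = f 1 := by
  funext y
  rw [Dop_lt q f y hp, qint_one, one_mul]

lemma Dop_two (p : ℕ) (hp : 1 ≤ p) (q : ℂ)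
    (hq : q = Complex.exp (2 * Real.pi * Complex.I / (p + 1)))
    (lp lm C₁ C₂ : ℂ) (u : ℕ → ℝ → ℂ)
    (hu : ∀ k ≤ p, ∀ x, u k x = Tf p q lp C₁ k x + Tf p q lm C₂ k x) :
    ∀ k ≤ p, ∀ x, Dop p q u k x = Tf p q lp (lp * C₁) k x + Tf p q lm (lm * C₂) k x := by
  intro k hk x
  rcases lt_or_eq_of_le hk with hlt | heq
  · simp only [Dop, if_pos hlt]
    rw [hu (k + 1) hlt x]
    simp only [Tf, qfact_succ]
    have h1 := qint_ne p hp q hq (n := k + 1) (by omega) (by omega)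
    have h2 := qfact_ne p hp q hq (k := k) (le_of_lt hlt)
    field_simp
    ring
  · rw [heq]
    simp only [Dop, lt_irrefl, if_false, if_pos rfl, ↓reduceIte]
    have hu0 : u 0 = fun y : ℝ =>
        C₁ * Complex.exp (lp ^ (p + 1) * y) + C₂ * Complex.exp (lm ^ (p + 1) * y) := by
      funext y; rw [hu 0 (Nat.zero_le p) y]; simp [Tf, qfact]
    rw [hu0]
    have hd : HasDerivAt (fun y : ℝ =>
        C₁ * Complex.exp (lp ^ (p + 1) * y) + C₂ * Complex.exp (lm ^ (p + 1) * y))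
        (C₁ * (lp ^ (p + 1) * Complex.exp (lp ^ (p + 1) * x))
          + C₂ * (lm ^ (p + 1) * Complex.exp (lm ^ (p + 1) * x))) x :=
      ((hasDerivAt_cexp_mul _ x).const_mul C₁).add ((hasDerivAt_cexp_mul _ x).const_mul C₂)
    rw [hd.deriv]
    simp only [Tf]
    have h2 := qfact_ne p hp q hq (le_refl p)
    field_simp
    ring

lemma eigen_rev (p : ℕ) (hp : 1 ≤ p) (q : ℂ)
    (hq : q = Complex.exp (2 * Real.pi * Complex.I / (p + 1)))
    (lam : ℂ) (u : ℕ → ℝ → ℂ) (hdiff : Differentiable ℝ (u 0))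
    (hu : ∀ k ≤ p, ∀ x, Dop p q u k x = lam * u k x) :
    ∀ k ≤ p, ∀ x, u k x = Tf p q lam (u 0 0) k x := by
  have step1 : ∀ k, k ≤ p → ∀ x, u k x = lam ^ k / qfact q k * u 0 x := by
    intro k
    induction k with
    | zero => intro _ x; simp [qfact]
    | succ n ih =>
      intro hk x
      have hn : n < p := by omega
      have h := hu n (le_of_lt hn) x
      simp only [Dop, if_pos hn] at h
      have h1 := qint_ne p hp q hq (n := n + 1) (by omega) (by omega)
      have h2 := qfact_ne p hp q hq (le_of_lt hn)
      rw [ih (le_of_lt hn) x] at h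
      rw [qfact_succ]
      field_simp at h ⊢
      linear_combination h
  have ode : ∀ x, deriv (u 0) x = lam ^ (p + 1) * u 0 x := by
    intro x
    have h := hu p (le_refl p) x
    simp only [Dop, lt_irrefl, if_false, if_pos rfl, ↓reduceIte] at h
    rw [step1 p (le_refl p) x] at h
    have h2 := qfact_ne p hp q hq (le_refl p)
    field_simp at h
    linear_combination h
  have key : ∀ x : ℝ, u 0 x = u 0 0 * Complex.exp (lam ^ (p + 1) * x) := by
    set c := lam ^ (p + 1) with hc
    have hF : ∀ x : ℝ, HasDerivAt (fun y => u 0 y * Complex.exp (-c * y)) 0 x := by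
      intro x
      have h1 := (hdiff x).hasDerivAt.mul (hasDerivAt_cexp_mul (-c) x)
      exact h1.congr_deriv (by rw [ode x]; ring)
    have hconst := fun x : ℝ => is_const_of_deriv_eq_zero
      (fun y => (hF y).differentiableAt) (fun y => (hF y).deriv) x 0
    intro x
    have h := hconst x
    calc u 0 x = u 0 x * Complex.exp (-c * x) * Complex.exp (c * x) := by
          rw [mul_assoc, ← Complex.exp_add]; simp
      _ = u 0 0 * Complex.exp (-c * (0 : ℝ)) * Complex.exp (c * x) := by rw [h]
      _ = u 0 0 * Complex.exp (c * x) := by norm_num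
  intro k hk x
  rw [step1 k hk x, key x, Tf]; ring

lemma shift (p : ℕ) (hp : 1 ≤ p) (q : ℂ) (f : ℕ → ℝ → ℂ)
    (hdf0 : Differentiable ℝ (f 0)) (hdf1 : Differentiable ℝ (f 1)) (μ : ℂ) :
    ∀ k ≤ p, ∀ x, Dop p q (fun k x => Dop p q f k x - μ * f k x) k x
      = Dop p q (Dop p q f) k x - μ * Dop p q f k x := by
  intro k hk x
  rcases lt_or_eq_of_le hk with hlt | heq
  · rw [Dop_lt q _ x hlt, Dop_lt q (Dop p q f) x hlt, Dop_lt q f x hlt]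
    ring
  · rw [heq, Dop_eq, Dop_eq, Dop_eq]
    have hG0 : (fun x : ℝ => Dop p q f 0 x - μ * f 0 x)
        = fun y => f 1 y - μ * f 0 y := by
      funext y
      rw [Dop_zero hp q f]
    rw [hG0, Dop_zero hp q f]
    have hd : ∀ y : ℝ, deriv (fun y => f 1 y - μ * f 0 y) y
        = deriv (f 1) y - μ * deriv (f 0) y := by
      intro y
      exact (((hdf1 y).hasDerivAt).sub (((hdf0 y).hasDerivAt).const_mul μ)).deriv
    rw [hd]
    ring

/-- Second order linear equation, non-degenerate case: if `λ₊ ≠ λ₋` are the two roots of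
`x² + c₁x + c₂`, then `f` solves `(D² + c₁D + c₂)f = 0` if and only if
`f = C₁ e_q(λ₊^(p+1)x; λ₊θ) + C₂ e_q(λ₋^(p+1)x; λ₋θ)` for some `C₁, C₂ ∈ ℂ`. -/
theorem second_order_solution (p : ℕ) (hp : 1 ≤ p) (q : ℂ)
    (hq : q = Complex.exp (2 * Real.pi * Complex.I / (p + 1)))
    (c₁ c₂ lp lm : ℂ) (hne : lp ≠ lm)
    (hlp : lp ^ 2 + c₁ * lp + c₂ = 0) (hlm : lm ^ 2 + c₁ * lm + c₂ = 0)
    (f : ℕ → ℝ → ℂ) (hf : ∀ k ≤ p, ContDiff ℝ (⊤ : ℕ∞) (f k)) :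
    (∀ k ≤ p, ∀ x : ℝ,
        (Dop p q)^[2] f k x + c₁ * Dop p q f k x + c₂ * f k x = 0) ↔
      ∃ C₁ C₂ : ℂ, ∀ k ≤ p, ∀ x : ℝ,
        f k x = C₁ * (lp ^ k / qfact q k) * Complex.exp (lp ^ (p + 1) * x)
          + C₂ * (lm ^ k / qfact q k) * Complex.exp (lm ^ (p + 1) * x) := by
  have hd : lp - lm ≠ 0 := sub_ne_zero.mpr hne
  have hc1 : c₁ = -(lp + lm) := by
    have h2 : (lp - lm) * (lp + lm + c₁) = 0 := by linear_combination hlp - hlm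
    rcases mul_eq_zero.mp h2 with h | h
    · exact absurd h hd
    · linear_combination h
  have hc2 : c₂ = lp * lm := by linear_combination hlp - lp * hc1
  have hit : (Dop p q)^[2] f = Dop p q (Dop p q f) := rfl
  constructor
  · -- converse: every solution is of the given form
    intro heq
    have hdf0 : Differentiable ℝ (f 0) := (hf 0 (Nat.zero_le p)).differentiable (by simp)
    have hdf1 : Differentiable ℝ (f 1) := (hf 1 hp).differentiable (by simp)
    have hDop0 : Dop p q f 0 = f 1 := Dop_zero hp q f
    have hdiffg : ∀ μ : ℂ, Differentiable ℝ
        ((fun k (x : ℝ) => Dop p q f k x - μ * f k x) 0) := by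
      intro μ
      have : ((fun k (x : ℝ) => Dop p q f k x - μ * f k x) 0)
          = fun x => f 1 x - μ * f 0 x := by
        funext y; simp only; rw [hDop0]
      rw [this]
      exact hdf1.sub (hdf0.const_mul μ)
    have heig : ∀ la mu : ℂ, c₁ = -(la + mu) → c₂ = la * mu →
        ∀ k ≤ p, ∀ x, Dop p q (fun k x => Dop p q f k x - mu * f k x) k x
          = la * ((fun k (x : ℝ) => Dop p q f k x - mu * f k x) k x) := by
      intro la mu h1 h2 k hk x
      rw [shift p hp q f hdf0 hdf1 mu k hk x]
      have h := heq k hk x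
      rw [hit] at h
      simp only
      linear_combination h - (Dop p q f k x) * h1 - (f k x) * h2
    have e1 := eigen_rev p hp q hq lp (fun k x => Dop p q f k x - lm * f k x)
      (hdiffg lm) (heig lp lm hc1 hc2)
    have e2 := eigen_rev p hp q hq lm (fun k x => Dop p q f k x - lp * f k x)
      (hdiffg lp) (by
        have : c₁ = -(lm + lp) := by rw [hc1]; ring
        have h2 : c₂ = lm * lp := by rw [hc2]; ring
        exact heig lm lp this h2)
    refine ⟨(Dop p q f 0 0 - lm * f 0 0) / (lp - lm),
      -((Dop p q f 0 0 - lp * f 0 0) / (lp - lm)), ?_⟩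
    intro k hk x
    have h1 := e1 k hk x
    have h2 := e2 k hk x
    simp only [Tf] at h1 h2
    have hkey : (lp - lm) * f k x
        = (Dop p q f 0 0 - lm * f 0 0) * (lp ^ k / qfact q k)
            * Complex.exp (lp ^ (p + 1) * x)
          - (Dop p q f 0 0 - lp * f 0 0) * (lm ^ k / qfact q k)
            * Complex.exp (lm ^ (p + 1) * x) := by
      linear_combination h1 - h2
    calc f k x = ((lp - lm) * f k x) / (lp - lm) := by field_simp
      _ = ((Dop p q f 0 0 - lm * f 0 0) * (lp ^ k / qfact q k)
              * Complex.exp (lp ^ (p + 1) * x)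
            - (Dop p q f 0 0 - lp * f 0 0) * (lm ^ k / qfact q k)
              * Complex.exp (lm ^ (p + 1) * x)) / (lp - lm) := by rw [hkey]
      _ = (Dop p q f 0 0 - lm * f 0 0) / (lp - lm) * (lp ^ k / qfact q k)
              * Complex.exp (lp ^ (p + 1) * x)
          + -((Dop p q f 0 0 - lp * f 0 0) / (lp - lm)) * (lm ^ k / qfact q k)
              * Complex.exp (lm ^ (p + 1) * x) := by ring
  · -- forward: the given form solves the equation
    rintro ⟨C₁, C₂, hC⟩
    have hC' : ∀ k ≤ p, ∀ x, f k x = Tf p q lp C₁ k x + Tf p q lm C₂ k x := by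
      intro k hk x; rw [hC k hk x]; rfl
    have h1 := Dop_two p hp q hq lp lm C₁ C₂ f hC'
    have h2 := Dop_two p hp q hq lp lm (lp * C₁) (lm * C₂) (Dop p q f) h1
    intro k hk x
    rw [hit, h2 k hk x, h1 k hk x, hC k hk x]
    simp only [Tf]
    linear_combination (C₁ * (lp ^ k / qfact q k) * Complex.exp (lp ^ (p + 1) * x)) * hlp
      + (C₂ * (lm ^ k / qfact q k) * Complex.exp (lm ^ (p + 1) * x)) * hlm
end

section
/- Every solution of the first-order linear system D w = A w, where w is an ℂⁿ-valued parasuperfunction and A ∈ M_n(ℂ), has the form w(x,θ) = E_q(A^{p+1}x; Aθ) c for a unique constant vector c ∈ ℂⁿ; hence the solution space is an n-dimensional complex vector space. -/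
open Complex Finset

/-- The parasupercovariant derivative on `ℂⁿ`-valued parasuperfunctions
`w(x,θ) = Σ_{k=0}^p w_k(x)θ^k`: `(Dw)_k = [k+1]_q w_{k+1}` for `k < p` and
`(Dw)_p = (1/[p]_q!) w_0'` (the derivative taken entrywise). -/
noncomputable def DopV (p : ℕ) (q : ℂ) (n : ℕ) (w : ℕ → ℝ → Fin n → ℂ) :
    ℕ → ℝ → Fin n → ℂ :=
  fun k x =>
    if k < p then qint q (k + 1) • w (k + 1) x
    else if k = p then (qfact q p)⁻¹ • fun i => deriv (fun t : ℝ => w 0 t i) x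
    else 0

-- auxiliary ODE lemma
theorem aux_ode (n : ℕ) (B : Matrix (Fin n) (Fin n) ℂ) (u : ℝ → Fin n → ℂ)
    (hu : ∀ (j : Fin n) (x : ℝ), HasDerivAt (fun t => u t j) ((B.mulVec (u x)) j) x) (x : ℝ) :
    u x = (NormedSpace.exp (x • B)).mulVec (u 0) := by
  letI : SeminormedRing (Matrix (Fin n) (Fin n) ℂ) := Matrix.linftyOpSemiNormedRing
  letI : NormedRing (Matrix (Fin n) (Fin n) ℂ) := Matrix.linftyOpNormedRing
  letI : NormedAlgebra ℝ (Matrix (Fin n) (Fin n) ℂ) := Matrix.linftyOpNormedAlgebra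
  haveI : CompleteSpace (Matrix (Fin n) (Fin n) ℂ) :=
    FiniteDimensional.complete ℝ _
  -- entry continuous linear maps
  have entry : ∀ (i j : Fin n) (f : ℝ → Matrix (Fin n) (Fin n) ℂ)
      (f' : Matrix (Fin n) (Fin n) ℂ) (x : ℝ), HasDerivAt f f' x →
      HasDerivAt (fun t => f t i j) (f' i j) x := by
    intro i j f f' x hf
    exact ((LinearMap.toContinuousLinearMap
        { toFun := fun M => M i j
          map_add' := fun _ _ => rfl
          map_smul' := fun _ _ => rfl }).hasFDerivAt.comp_hasDerivAt x hf : )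
  set E : ℝ → Matrix (Fin n) (Fin n) ℂ := fun t => NormedSpace.exp (t • (-B)) with hE
  have hEd : ∀ t : ℝ, HasDerivAt E (E t * (-B)) t := fun t =>
    hasDerivAt_exp_smul_const (-B) t
  have key : ∀ (i : Fin n) (t : ℝ),
      HasDerivAt (fun s => ((E s).mulVec (u s)) i) 0 t := by
    intro i t
    have h1 : HasDerivAt (fun s => ∑ j : Fin n, E s i j * u s j)
        (∑ j : Fin n, ((E t * (-B)) i j * u t j + E t i j * (B.mulVec (u t)) j)) t := by
      exact HasDerivAt.fun_sum fun j _ => (entry i j E _ t (hEd t)).mul (hu j t)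
    have h2 : (∑ j : Fin n, ((E t * (-B)) i j * u t j + E t i j * (B.mulVec (u t)) j)) = 0 := by
      rw [Finset.sum_add_distrib]
      have e1 : (∑ j : Fin n, (E t * (-B)) i j * u t j) = ((E t * (-B)).mulVec (u t)) i := rfl
      have e2 : (∑ j : Fin n, E t i j * (B.mulVec (u t)) j) = ((E t).mulVec (B.mulVec (u t))) i := rfl
      rw [e1, e2, Matrix.mulVec_mulVec, mul_neg, Matrix.neg_mulVec]
      simp
    rw [← h2]
    exact h1
  have hconst : ∀ (i : Fin n) (t : ℝ),
      ((E t).mulVec (u t)) i = ((E 0).mulVec (u 0)) i := by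
    intro i t
    exact is_const_of_deriv_eq_zero (fun s => (key i s).differentiableAt)
      (fun s => (key i s).deriv) t 0
  have hE0 : E 0 = 1 := by rw [hE]; simp [NormedSpace.exp_zero]
  have hmain : (E x).mulVec (u x) = u 0 := by
    funext i
    rw [hconst i x, hE0, Matrix.one_mulVec]
  have hinv : NormedSpace.exp (x • B) * E x = 1 := by
    rw [hE, show (fun t : ℝ => NormedSpace.exp (t • -B)) x = NormedSpace.exp (x • -B) from rfl,
      ← Matrix.exp_add_of_commute]
    · rw [smul_neg, add_neg_cancel, NormedSpace.exp_zero]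
    · exact (((Commute.refl B).neg_right).smul_left x).smul_right x
  have hexp : NormedSpace.exp (x • B) = NormedSpace.exp (x • B) := by
    rfl
  rw [hexp, ← hmain, Matrix.mulVec_mulVec, hinv, Matrix.one_mulVec]


/-- Every solution of the first-order linear system `D w = A w` has the form
`w(x,θ) = E_q(A^(p+1)x; Aθ) c` for a unique constant vector `c ∈ ℂⁿ`; componentwise,
`w_k(x) = (A^k/[k]_q!) e^(A^(p+1)x) c`. Hence the solution space is an `n`-dimensional
complex vector space. -/
theorem first_order_system_solution (p : ℕ) (hp : 1 ≤ p) (q : ℂ)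
    (hq : q = Complex.exp (2 * Real.pi * Complex.I / (p + 1)))
    (n : ℕ) (A : Matrix (Fin n) (Fin n) ℂ)
    (w : ℕ → ℝ → Fin n → ℂ)
    (hw : ∀ k ≤ p, ∀ i : Fin n, ContDiff ℝ (⊤ : ℕ∞) (fun x : ℝ => w k x i))
    (h : ∀ k ≤ p, ∀ x : ℝ, DopV p q n w k x = A.mulVec (w k x)) :
    ∃! c : Fin n → ℂ, ∀ k ≤ p, ∀ x : ℝ,
      w k x = ((qfact q k)⁻¹ • (A ^ k * NormedSpace.exp (x • A ^ (p + 1)))).mulVec c := by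
  -- q^m ≠ 1 for 1 ≤ m ≤ p
  have hq1 : ∀ m : ℕ, 1 ≤ m → m ≤ p → q ^ m ≠ 1 := by
    intro m h1 h2 hqm
    rw [hq, ← Complex.exp_nat_mul, Complex.exp_eq_one_iff] at hqm
    obtain ⟨k, hk⟩ := hqm
    have hp1 : ((p : ℂ) + 1) ≠ 0 := by exact_mod_cast Nat.succ_ne_zero p
    have h2pi : (2 * (Real.pi : ℂ) * Complex.I) ≠ 0 := by
      simp [Real.pi_ne_zero, Complex.I_ne_zero, Complex.ofReal_ne_zero]
    have hmk : (m : ℂ) = ((p : ℂ) + 1) * k := by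
      apply mul_right_cancel₀ h2pi
      field_simp at hk
      linear_combination (2 * (Real.pi : ℂ) * Complex.I) * hk
    have hmk' : (m : ℤ) = ((p : ℤ) + 1) * k := by exact_mod_cast hmk
    have hdvd : ((p : ℤ) + 1) ∣ (m : ℤ) := ⟨k, hmk'⟩
    have := Int.le_of_dvd (by exact_mod_cast h1) hdvd
    omega
  have hqne1 : q ≠ 1 := by
    have := hq1 1 le_rfl hp
    simpa using this
  have qnz : ∀ m : ℕ, 1 ≤ m → m ≤ p → qint q m ≠ 0 := by
    intro m h1 h2
    rw [qint, geom_sum_eq hqne1]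
    exact div_ne_zero (sub_ne_zero.2 (hq1 m h1 h2)) (sub_ne_zero.2 hqne1)
  have qfnz : ∀ m : ℕ, m ≤ p → qfact q m ≠ 0 := by
    intro m hm
    rw [qfact]
    refine Finset.prod_ne_zero_iff.mpr fun i hi => ?_
    exact qnz (i + 1) le_add_self (by have := Finset.mem_range.mp hi; omega)
  -- step: w k = (qfact q k)⁻¹ • A^k.mulVec (w 0)
  have step : ∀ k, k ≤ p → ∀ x : ℝ, w k x = (qfact q k)⁻¹ • (A ^ k).mulVec (w 0 x) := by
    intro k
    induction k with
    | zero =>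
      intro _ x
      simp [qfact, Matrix.one_mulVec]
    | succ k ih =>
      intro hk x
      have hklt : k < p := hk
      have hD := h k (le_of_lt hklt) x
      rw [DopV, if_pos hklt] at hD
      have hw1 : w (k + 1) x = (qint q (k + 1))⁻¹ • A.mulVec (w k x) := by
        rw [← hD, smul_smul, inv_mul_cancel₀ (qnz (k + 1) le_add_self hk), one_smul]
      have hqf : qfact q (k + 1) = qfact q k * qint q (k + 1) :=
        Finset.prod_range_succ (fun i => qint q (i + 1)) k
      rw [hw1, ih (le_of_lt hklt) x, Matrix.mulVec_smul, smul_smul, Matrix.mulVec_mulVec,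
        ← pow_succ', hqf, mul_inv, mul_comm]
  -- the derivative equation for w 0
  set B : Matrix (Fin n) (Fin n) ℂ := A ^ (p + 1) with hB
  have hder : ∀ (j : Fin n) (x : ℝ),
      HasDerivAt (fun t => w 0 t j) ((B.mulVec (w 0 x)) j) x := by
    intro j x
    have hdiff : DifferentiableAt ℝ (fun t => w 0 t j) x :=
      ((hw 0 (Nat.zero_le p) j).differentiable (by simp)).differentiableAt
    have hD := h p le_rfl x
    rw [DopV, if_neg (lt_irrefl p), if_pos rfl] at hD
    have h1 : (fun i => deriv (fun t : ℝ => w 0 t i) x) = qfact q p • A.mulVec (w p x) := by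
      rw [← hD, smul_smul, mul_inv_cancel₀ (qfnz p le_rfl), one_smul]
    have h2 : deriv (fun t : ℝ => w 0 t j) x = (B.mulVec (w 0 x)) j := by
      have := congrFun h1 j
      rw [this, step p le_rfl x, Matrix.mulVec_smul, Matrix.mulVec_mulVec, ← pow_succ', ← hB]
      simp only [Pi.smul_apply, smul_eq_mul, ← mul_assoc, mul_inv_cancel₀ (qfnz p le_rfl),
        one_mul]
    rw [← h2]
    exact hdiff.hasDerivAt
  have hsol := aux_ode n B (w 0) hder
  refine ⟨w 0 0, ?_, ?_⟩
  · intro k hk x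
    rw [step k hk x, hsol x, Matrix.smul_mulVec, Matrix.mulVec_mulVec]
  · intro c hc
    have := hc 0 (Nat.zero_le p) 0
    rw [this]
    simp [qfact, NormedSpace.exp_zero, Matrix.one_mulVec]
end
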